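/- The chain distance d on the cusps is a Γ-invariant metric: (i) d(a,b) is well defined, i.e. for any two cusps a, b there exists a chain of finite length from a to b; (ii) d(a,b) = d(b,a) for all cusps a, b; (iii) d(a,b) = 0 if and only if a = b; (iv) d(a,c) ≤ d(a,b) + d(b,c) for all cusps a, b, c; (v) d(γ·a, γ·b) = d(a,b) for all γ ∈ Γ and all cusps a, b. -/

import Mathlib

open MvPolynomial

/-- `SL(2, ℤ)`. -/
abbrev SL2Z := Matrix.SpecialLinearGroup (Fin 2) ℤ

instance : Fact (Even (Fintype.card (Fin 2))) := ⟨by decide⟩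

/-- The subgroup `{±1}` of `SL(2,ℤ)`. -/
def pmOne : Subgroup SL2Z := Subgroup.zpowers (-1 : SL2Z)

instance pmOne_normal : pmOne.Normal := by
  constructor
  intro x hx g
  obtain ⟨k, rfl⟩ := Subgroup.mem_zpowers_iff.mp hx
  have hc : Commute g ((-1 : SL2Z) ^ k) := by
    refine Commute.zpow_right ?_ k
    unfold Commute SemiconjBy
    rw [mul_neg_one, neg_one_mul]
  rw [hc.eq, mul_assoc, mul_inv_cancel, mul_one]
  exact Subgroup.mem_zpowers_iff.mpr ⟨k, rfl⟩

/-- `Γ = PSL(2, ℤ) = SL(2,ℤ)/{±1}`. -/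
abbrev PSL2Z := SL2Z ⧸ pmOne

/-- `S = [[0,-1],[1,0]]` in `Γ`. -/
def pS : PSL2Z := QuotientGroup.mk ⟨!![0, -1; 1, 0], by norm_num [Matrix.det_fin_two_of]⟩

/-- `U = [[0,1],[-1,1]]` in `Γ`. -/
def pU : PSL2Z := QuotientGroup.mk ⟨!![0, 1; -1, 1], by norm_num [Matrix.det_fin_two_of]⟩

/-- `T = [[1,1],[0,1]]` in `Γ`. -/
def pT : PSL2Z := QuotientGroup.mk ⟨!![1, 1; 0, 1], by norm_num [Matrix.det_fin_two_of]⟩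

/-- The cusps `ℙ¹(ℚ) = ℚ ∪ {∞}`. -/
abbrev Cusp := OnePoint ℚ

/-- The Möbius action of `SL(2, ℤ)` on the cusps. -/
def mobiusSL (γ : SL2Z) : Cusp → Cusp := fun x =>
  match x with
  | OnePoint.infty =>
      if ((γ.1 1 0 : ℤ) : ℚ) = 0 then OnePoint.infty
      else OnePoint.some (((γ.1 0 0 : ℤ) : ℚ) / ((γ.1 1 0 : ℤ) : ℚ))
  | OnePoint.some r =>
      if ((γ.1 1 0 : ℤ) : ℚ) * r + ((γ.1 1 1 : ℤ) : ℚ) = 0 then OnePoint.infty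
      else OnePoint.some
        ((((γ.1 0 0 : ℤ) : ℚ) * r + ((γ.1 0 1 : ℤ) : ℚ)) /
          (((γ.1 1 0 : ℤ) : ℚ) * r + ((γ.1 1 1 : ℤ) : ℚ)))

lemma mobiusSL_neg (γ : SL2Z) : mobiusSL (-γ) = mobiusSL γ := by
  funext x
  cases x with
  | none =>
      simp only [mobiusSL, Matrix.SpecialLinearGroup.coe_neg, Matrix.neg_apply, Int.cast_neg,
        neg_eq_zero, neg_div_neg_eq]
  | some r =>
      simp only [mobiusSL, Matrix.SpecialLinearGroup.coe_neg, Matrix.neg_apply, Int.cast_neg,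
        neg_mul, ← neg_add, neg_eq_zero, neg_div_neg_eq]

/-- The Möbius action of `Γ = PSL(2, ℤ)` on the cusps. -/
def mobius (q : PSL2Z) : Cusp → Cusp :=
  Quotient.liftOn q mobiusSL (by
    intro a b h
    replace h : a⁻¹ * b ∈ pmOne := QuotientGroup.leftRel_apply.mp h
    obtain ⟨k, hk⟩ := Subgroup.mem_zpowers_iff.mp h
    have hb : b = a * (-1 : SL2Z) ^ k := by rw [hk, mul_inv_cancel_left]
    rcases Int.even_or_odd k with he | ho
    · rw [hb, he.neg_one_zpow, mul_one]
    · obtain ⟨m, rfl⟩ := ho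
      have h2 : ((-1 : SL2Z)) ^ (2 * m) = 1 := Even.neg_one_zpow ⟨m, by ring⟩
      rw [hb, zpow_add_one, h2, one_mul, mul_neg_one, mobiusSL_neg])

/-- The cusp `∞`. -/
def cInf : Cusp := OnePoint.infty

/-- The cusp `0`. -/
def cZero : Cusp := OnePoint.some 0

/-- A chain of length `N ≥ 1` from `a` to `b` : matrices `γ_0, ..., γ_{N-1} ∈ Γ` with
`a = γ_0·∞`, `γ_i·0 = γ_{i+1}·∞` and `γ_{N-1}·0 = b`. -/
def IsChainOf (a b : Cusp) (N : ℕ) : Prop :=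
  0 < N ∧ ∃ γ : ℕ → PSL2Z,
    mobius (γ 0) cInf = a ∧
    (∀ i : ℕ, i + 1 < N → mobius (γ i) cZero = mobius (γ (i + 1)) cInf) ∧
    mobius (γ (N - 1)) cZero = b

open Classical in
/-- The chain distance on cusps : `d(a,a) = 0` and `d(a,b)` is the minimal length of a chain
from `a` to `b` for `a ≠ b`. -/
noncomputable def cuspDist (a b : Cusp) : ℕ :=
  if a = b then 0 else sInf {N | IsChainOf a b N}

/-- The height of a cusp : `h(a) = max (d(a,∞), d(a,0))`. -/
noncomputable def cuspHeight (a : Cusp) : ℕ :=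
  max (cuspDist a cInf) (cuspDist a cZero)

/-!
Every chain step `γ·∞ → γ·0` is an edge of the Farey graph, and `d` is its path metric. Chains
can be translated by `Γ`, concatenated, and reversed (replace `γᵢ` by `γ_{N-1-i} S`, as `S`
swaps `∞` and `0`), which gives symmetry, the triangle inequality and invariance. For
existence, the `g ∈ Γ` with `∞` joined to `g·∞` form a subgroup containing `S` and `T`, hence
all of `Γ`; since `Γ` acts transitively on the cusps, every cusp is joined to `∞`.
-/

open Matrix.SpecialLinearGroup ModularGroup

lemma mobiusSL_eq_smul (g : SL2Z) (x : Cusp) : mobiusSL g x = mapGL ℚ g • x := by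
  induction x using OnePoint.rec with
  | infty => simp [mobiusSL, OnePoint.smul_infty_eq_ite]
  | coe r => simp [mobiusSL, OnePoint.smul_some_eq_ite]

lemma mobius_mk (g : SL2Z) : mobius (g : PSL2Z) = mobiusSL g := rfl

lemma mobius_one (x : Cusp) : mobius 1 x = x := by
  rw [← QuotientGroup.mk_one, mobius_mk, mobiusSL_eq_smul, map_one, one_smul]

lemma mobius_mul (g h : PSL2Z) (x : Cusp) : mobius (g * h) x = mobius g (mobius h x) := by
  induction g using QuotientGroup.induction_on
  induction h using QuotientGroup.induction_on
  simp only [← QuotientGroup.mk_mul, mobius_mk, mobiusSL_eq_smul, map_mul, mul_smul]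

lemma mobius_inv_apply (g : PSL2Z) (x : Cusp) : mobius g⁻¹ (mobius g x) = x := by
  rw [← mobius_mul, inv_mul_cancel, mobius_one]

lemma mobius_injective (g : PSL2Z) : Function.Injective (mobius g) :=
  Function.LeftInverse.injective (mobius_inv_apply g)

lemma mobius_S_cInf : mobius (S : PSL2Z) cInf = cZero := by
  simp [mobius_mk, mobiusSL, cInf, cZero]

lemma mobius_S_cZero : mobius (S : PSL2Z) cZero = cInf := by
  simp [mobius_mk, mobiusSL, cInf, cZero]

lemma mobius_T_cInf : mobius (T : PSL2Z) cInf = cInf := by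
  simp [mobius_mk, mobiusSL, cInf]

namespace IsChainOf

variable {a b c : Cusp} {M N : ℕ}

lemma map (g : PSL2Z) (h : IsChainOf a b N) : IsChainOf (mobius g a) (mobius g b) N := by
  obtain ⟨hN, γ, h_start, h_link, h_end⟩ := h
  refine ⟨hN, fun i => g * γ i, ?_, fun i hi => ?_, ?_⟩
  · rw [mobius_mul, h_start]
  · rw [mobius_mul, mobius_mul, h_link i hi]
  · rw [mobius_mul, h_end]

lemma append (h₁ : IsChainOf a b M) (h₂ : IsChainOf b c N) : IsChainOf a c (M + N) := by
  obtain ⟨hM, γ, γ_start, γ_link, γ_end⟩ := h₁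
  obtain ⟨hN, δ, δ_start, δ_link, δ_end⟩ := h₂
  refine ⟨by omega, fun i => if i < M then γ i else δ (i - M), ?_, fun i hi => ?_, ?_⟩
  · simpa [hM] using γ_start
  · rcases lt_trichotomy (i + 1) M with h | h | h
    · simpa [h, show i < M by omega] using γ_link i h
    · simp only [show i < M by omega, h, lt_irrefl, if_true, if_false, Nat.sub_self]
      rw [show i = M - 1 by omega, γ_end, δ_start]
    · simp only [show ¬i < M by omega, show ¬i + 1 < M by omega, if_false]
      rw [show i + 1 - M = i - M + 1 by omega]
      exact δ_link _ (by omega)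
  · simp only [show ¬M + N - 1 < M by omega, if_false]
    rwa [show M + N - 1 - M = N - 1 by omega]

lemma symm (h : IsChainOf a b N) : IsChainOf b a N := by
  obtain ⟨hN, γ, h_start, h_link, h_end⟩ := h
  refine ⟨hN, fun i => γ (N - 1 - i) * S, ?_, fun i hi => ?_, ?_⟩
  · rwa [mobius_mul, mobius_S_cInf, Nat.sub_zero]
  · rw [mobius_mul, mobius_mul, mobius_S_cInf, mobius_S_cZero,
      h_link (N - 1 - (i + 1)) (by omega), show N - 1 - (i + 1) + 1 = N - 1 - i by omega]
  · rwa [mobius_mul, mobius_S_cZero, Nat.sub_self]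

end IsChainOf

lemma isChainOf_cInf_cZero : IsChainOf cInf cZero 1 :=
  ⟨one_pos, fun _ => 1, mobius_one _, fun _ hi => absurd hi (by omega), mobius_one _⟩

lemma isChainOf_cInf_cInf : IsChainOf cInf cInf 2 :=
  isChainOf_cInf_cZero.append isChainOf_cInf_cZero.symm

def chainConnected : Subgroup PSL2Z where
  carrier := {g | ∃ N, IsChainOf cInf (mobius g cInf) N}
  one_mem' := ⟨2, by rw [mobius_one]; exact isChainOf_cInf_cInf⟩
  mul_mem' := by
    rintro g h ⟨M, hM⟩ ⟨N, hN⟩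
    exact ⟨M + N, by simpa only [mobius_mul] using hM.append (hN.map g)⟩
  inv_mem' := by
    rintro g ⟨N, hN⟩
    exact ⟨N, by simpa only [mobius_inv_apply] using (hN.map g⁻¹).symm⟩

lemma chainConnected_eq_top : chainConnected = ⊤ := by
  have h : Subgroup.closure {S, T} ≤ chainConnected.comap (QuotientGroup.mk' pmOne) := by
    rw [Subgroup.closure_le]
    rintro _ (rfl | rfl)
    · exact ⟨1, by simpa [mobius_S_cInf] using isChainOf_cInf_cZero⟩
    · exact ⟨2, by simpa [mobius_T_cInf] using isChainOf_cInf_cInf⟩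
  rw [SpecialLinearGroup.SL2Z_generators] at h
  rw [Subgroup.eq_top_iff']
  intro g
  induction g using QuotientGroup.induction_on
  exact h (Subgroup.mem_top _)

lemma exists_isChainOf_cInf (c : Cusp) : ∃ N, IsChainOf cInf c N := by
  obtain ⟨g, rfl⟩ := OnePoint.exists_mem_SL2 ℤ c
  obtain ⟨N, hN⟩ : (g : PSL2Z) ∈ chainConnected := chainConnected_eq_top ▸ Subgroup.mem_top _
  exact ⟨N, by rwa [mobius_mk, mobiusSL_eq_smul] at hN⟩

lemma exists_isChainOf (a b : Cusp) : ∃ N, IsChainOf a b N := by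
  obtain ⟨M, hM⟩ := exists_isChainOf_cInf a
  obtain ⟨N, hN⟩ := exists_isChainOf_cInf b
  exact ⟨M + N, hM.symm.append hN⟩

lemma cuspDist_self (a : Cusp) : cuspDist a a = 0 := if_pos rfl

lemma isChainOf_cuspDist {a b : Cusp} (h : a ≠ b) : IsChainOf a b (cuspDist a b) := by
  rw [cuspDist, if_neg h]
  exact Nat.sInf_mem (exists_isChainOf a b)

lemma cuspDist_le {a b : Cusp} {N : ℕ} (h : IsChainOf a b N) : cuspDist a b ≤ N := by
  unfold cuspDist
  split_ifs
  · exact N.zero_le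
  · exact Nat.sInf_le h

lemma cuspDist_le_of_forall_isChainOf {a b a' b' : Cusp} (h_eq : a = b → a' = b')
    (h_chain : ∀ N, IsChainOf a b N → IsChainOf a' b' N) : cuspDist a' b' ≤ cuspDist a b := by
  by_cases h : a = b
  · rw [h_eq h, cuspDist_self]
    exact Nat.zero_le _
  · exact cuspDist_le (h_chain _ (isChainOf_cuspDist h))

lemma cuspDist_comm (a b : Cusp) : cuspDist a b = cuspDist b a :=
  le_antisymm (cuspDist_le_of_forall_isChainOf Eq.symm fun _ => IsChainOf.symm)
    (cuspDist_le_of_forall_isChainOf Eq.symm fun _ => IsChainOf.symm)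

lemma cuspDist_eq_zero_iff {a b : Cusp} : cuspDist a b = 0 ↔ a = b := by
  refine ⟨fun h => ?_, fun h => h ▸ cuspDist_self a⟩
  by_contra hab
  exact (isChainOf_cuspDist hab).1.ne' h

lemma cuspDist_triangle (a b c : Cusp) : cuspDist a c ≤ cuspDist a b + cuspDist b c := by
  obtain rfl | hab := eq_or_ne a b
  · rw [cuspDist_self, zero_add]
  obtain rfl | hbc := eq_or_ne b c
  · rw [cuspDist_self, add_zero]
  exact cuspDist_le ((isChainOf_cuspDist hab).append (isChainOf_cuspDist hbc))

lemma cuspDist_mobius (γ : PSL2Z) (a b : Cusp) :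
    cuspDist (mobius γ a) (mobius γ b) = cuspDist a b := by
  refine le_antisymm (cuspDist_le_of_forall_isChainOf (congrArg _) fun _ => IsChainOf.map γ) ?_
  refine cuspDist_le_of_forall_isChainOf (fun h => mobius_injective γ h) fun N h => ?_
  simpa only [mobius_inv_apply] using h.map γ⁻¹

/-- The chain distance is a well-defined `Γ`-invariant metric on the cusps. -/
theorem cuspDist_is_invariant_metric :
    -- (i) chains of finite length always exist
    (∀ a b : Cusp, ∃ N : ℕ, IsChainOf a b N) ∧
    -- (ii) symmetry
    (∀ a b : Cusp, cuspDist a b = cuspDist b a) ∧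
    -- (iii) separation
    (∀ a b : Cusp, cuspDist a b = 0 ↔ a = b) ∧
    -- (iv) triangle inequality
    (∀ a b c : Cusp, cuspDist a c ≤ cuspDist a b + cuspDist b c) ∧
    -- (v) Γ-invariance
    (∀ (γ : PSL2Z) (a b : Cusp), cuspDist (mobius γ a) (mobius γ b) = cuspDist a b) :=
  ⟨exists_isChainOf, cuspDist_comm, fun _ _ => cuspDist_eq_zero_iff, cuspDist_triangle,
    cuspDist_mobius⟩
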